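/- For every positive integer k and every n ≥ 4·3^{2k+1}, χ_L(S_n(k)) ≤ 2k·n^{1/k}. -/

import Mathlib

open SimpleGraph

/-- Distance from a vertex to a set of vertices, `d(u,S) = min {d(u,v) : v ∈ S}`. -/
noncomputable def distToSet {V : Type*} (G : SimpleGraph V) (u : V) (S : Set V) : ℕ :=
  sInf (G.dist u '' S)

/-- `c` is a locating coloring of `G` with `k` colors: a proper coloring such that any two
distinct vertices are resolved by some color class. -/
def IsLocatingColoring {V : Type*} (G : SimpleGraph V) {k : ℕ} (c : V → Fin k) : Prop :=
  (∀ u v : V, G.Adj u v → c u ≠ c v) ∧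
  ∀ u v : V, u ≠ v →
    ∃ i : Fin k, distToSet G u (c ⁻¹' {i}) ≠ distToSet G v (c ⁻¹' {i})

/-- The locating chromatic number `χ_L(G)`: the least `k` admitting a locating `k`-coloring. -/
noncomputable def locatingChromaticNumber {V : Type*} (G : SimpleGraph V) : ℕ :=
  sInf {k : ℕ | ∃ c : V → Fin k, IsLocatingColoring G c}

/-- The vertex set of the palm `S_n(a_1, …, a_n)`: a hub `none` and, for each leg
`i : Fin n` (representing leg `i+1`), vertices `j : Fin (a (i+1))`
(vertex `some ⟨i, j⟩` represents `a_{i+1, j+1}`). -/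
def PalmVert (n : ℕ) (a : ℕ → ℕ) : Type :=
  Option ((i : Fin n) × Fin (a ((i : ℕ) + 1)))

/-- The palm `S_n(a_1, …, a_n)`: the star `K_{1,n}` whose `i`-th edge has been subdivided
`a_i - 1` times; the hub is joined to the first vertex of each leg, and consecutive
vertices along a leg are adjacent. -/
def Palm (n : ℕ) (a : ℕ → ℕ) : SimpleGraph (PalmVert n a) :=
  SimpleGraph.fromRel fun u v =>
    match u, v with
    | none, some ⟨_, j⟩ => (j : ℕ) = 0
    | some ⟨i, j⟩, some ⟨i', j'⟩ => (i : ℕ) = (i' : ℕ) ∧ (j' : ℕ) = (j : ℕ) + 1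
    | _, _ => False

/-!
Encode the `n` legs injectively by words `e i` of length `k` over `m = ⌈n^{1/k}⌉` letters. Give the
hub a colour of its own and the `j`-th vertex of leg `i` the colour `(j, e i j)`: `k m + 1` colours.
The distance to the hub's colour class is the depth, so only vertices at the same depth `j` on
distinct legs `i ≠ i'` remain to be separated. If `e i` and `e i'` differ at the letter `p`, the
class of `(p, e i p)` contains the `p`-th vertex of leg `i`, within distance `j + p` of `(i, j)`,
but has no vertex on leg `i'`, so it is at distance `j + p + 2` from `(i', j)`. Finally
`k ⌈n^{1/k}⌉ + 1 ≤ 2 k n^{1/k}` as soon as `n^{1/k} ≥ 2`.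
-/

namespace SimpleGraph

variable {V : Type*} {G : SimpleGraph V}

theorem Walk.abs_sub_le_length {f : V → ℤ} (hf : ∀ ⦃a b⦄, G.Adj a b → |f a - f b| ≤ 1)
    {u v : V} (w : G.Walk u v) : |f u - f v| ≤ w.length := by
  induction w with
  | nil => simp
  | @cons a b c hab w ih =>
    calc |f a - f c| ≤ |f a - f b| + |f b - f c| := abs_sub_le _ _ _
      _ ≤ 1 + w.length := add_le_add (hf hab) ih
      _ = (cons hab w).length := by rw [length_cons]; push_cast; ring

theorem Reachable.abs_sub_le_dist {f : V → ℤ} (hf : ∀ ⦃a b⦄, G.Adj a b → |f a - f b| ≤ 1)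
    {u v : V} (h : G.Reachable u v) : |f u - f v| ≤ G.dist u v := by
  obtain ⟨w, hw⟩ := h.exists_walk_length_eq_dist
  exact hw ▸ w.abs_sub_le_length hf

end SimpleGraph

theorem distToSet_singleton {V : Type*} (G : SimpleGraph V) (u v : V) :
    distToSet G u {v} = G.dist u v := by
  rw [distToSet, Set.image_singleton, csInf_singleton]

theorem distToSet_le_dist {V : Type*} (G : SimpleGraph V) {u v : V} {S : Set V} (hv : v ∈ S) :
    distToSet G u S ≤ G.dist u v :=
  Nat.sInf_le ⟨v, hv, rfl⟩

theorem le_distToSet {V : Type*} (G : SimpleGraph V) {u : V} {S : Set V} {d : ℕ}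
    (hS : S.Nonempty) (h : ∀ v ∈ S, d ≤ G.dist u v) : d ≤ distToSet G u S :=
  le_csInf (hS.image _) (by rintro _ ⟨v, hv, rfl⟩; exact h v hv)

theorem locatingChromaticNumber_le_card {V α : Type*} [Fintype α] (G : SimpleGraph V)
    (c : V → α) (hproper : ∀ u v, G.Adj u v → c u ≠ c v)
    (hresolving : ∀ u v, u ≠ v → ∃ a, distToSet G u (c ⁻¹' {a}) ≠ distToSet G v (c ⁻¹' {a})) :
    locatingChromaticNumber G ≤ Fintype.card α := by
  let σ := Fintype.equivFin α
  have hclass (a : α) : σ ∘ c ⁻¹' {σ a} = c ⁻¹' {a} := by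
    ext; simp
  refine Nat.sInf_le ⟨σ ∘ c, fun u v huv ↦ σ.injective.ne (hproper u v huv), fun u v huv ↦ ?_⟩
  obtain ⟨a, ha⟩ := hresolving u v huv
  exact ⟨σ a, by rwa [hclass]⟩

namespace Palm

variable {n : ℕ} {a : ℕ → ℕ}

def hub : PalmVert n a := none

/-- The vertex `a_{i+1, j+1}` (legs and positions are indexed from `0`). -/
def legVertex (i : Fin n) (j : Fin (a (i + 1))) : PalmVert n a := some ⟨i, j⟩

theorem eq_hub_or_exists_eq_legVertex (u : PalmVert n a) :
    u = hub ∨ ∃ i j, u = legVertex i j := by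
  rcases u with _ | ⟨i, j⟩
  exacts [.inl rfl, .inr ⟨i, j, rfl⟩]

theorem legVertex_ne_hub (i : Fin n) (j : Fin (a (i + 1))) : legVertex i j ≠ hub := nofun

theorem adj_hub_legVertex {i : Fin n} {j : Fin (a (i + 1))} (hj : (j : ℕ) = 0) :
    (Palm n a).Adj hub (legVertex i j) :=
  (fromRel_adj _ _ _).2 ⟨nofun, .inl hj⟩

theorem adj_legVertex {i : Fin n} {j j' : Fin (a (i + 1))} (hj : (j' : ℕ) = j + 1) :
    (Palm n a).Adj (legVertex i j) (legVertex i j') :=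
  (fromRel_adj _ _ _).2 ⟨fun h ↦ by cases h; omega, .inl ⟨rfl, hj⟩⟩

theorem reachable_legVertex_hub (i : Fin n) (j : Fin (a (i + 1))) :
    (Palm n a).Reachable (legVertex i j) hub := by
  obtain ⟨j, hj⟩ := j
  induction j with
  | zero => exact (adj_hub_legVertex rfl).reachable.symm
  | succ j ih =>
    exact (adj_legVertex (j := ⟨j, by omega⟩) rfl).reachable.symm.trans (ih (by omega))

theorem connected : (Palm n a).Connected := by
  have : Nonempty (PalmVert n a) := ⟨hub⟩
  refine .mk fun u v ↦ ?_
  suffices ∀ u, (Palm n a).Reachable u hub from (this u).trans (this v).symm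
  intro u
  obtain rfl | ⟨i, j, rfl⟩ := eq_hub_or_exists_eq_legVertex u
  exacts [.rfl, reachable_legVertex_hub i j]

theorem dist_legVertex_le_of_val_eq_zero {i : Fin n} (j : Fin (a (i + 1)))
    {j₀ : Fin (a (i + 1))} (hj₀ : (j₀ : ℕ) = 0) :
    (Palm n a).dist (legVertex i j) (legVertex i j₀) ≤ j := by
  obtain ⟨j, hj⟩ := j
  induction j with
  | zero => rw [show j₀ = ⟨0, hj⟩ from Fin.ext hj₀, dist_self]
  | succ j ih =>
    calc _ ≤ (Palm n a).dist (legVertex i ⟨j + 1, hj⟩) (legVertex i ⟨j, by omega⟩)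
          + (Palm n a).dist (legVertex i ⟨j, by omega⟩) (legVertex i j₀) :=
          connected.dist_triangle
      _ ≤ 1 + j := by
          rw [dist_eq_one_iff_adj.2 (adj_legVertex rfl).symm]
          exact Nat.add_le_add_left (ih _) 1
      _ = j + 1 := by ring

/-- A potential that changes by at most one along edges; it certifies the lower bounds on
distances in the palm. -/
def signedDepth (i₀ : Fin n) : PalmVert n a → ℤ
  | none => 0
  | some ⟨i, j⟩ => if i = i₀ then (j : ℤ) + 1 else -((j : ℤ) + 1)

theorem abs_signedDepth_sub_le_one (i₀ : Fin n) ⦃u v : PalmVert n a⦄ (h : (Palm n a).Adj u v) :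
    |signedDepth i₀ u - signedDepth i₀ v| ≤ 1 := by
  obtain ⟨-, h⟩ := (fromRel_adj _ _ _).1 h
  rcases u with _ | ⟨i, j⟩ <;> rcases v with _ | ⟨i', j'⟩ <;>
    simp only [signedDepth, or_false, false_or, or_self] at h ⊢
  all_goals split_ifs <;> rw [abs_le] <;> omega

theorem signedDepth_hub (i₀ : Fin n) : signedDepth i₀ (hub : PalmVert n a) = 0 := rfl

theorem signedDepth_legVertex_self (i : Fin n) (j : Fin (a (i + 1))) :
    signedDepth i (legVertex i j) = (j : ℤ) + 1 :=
  if_pos rfl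

theorem signedDepth_legVertex_of_ne {i i₀ : Fin n} (hi : i ≠ i₀) (j : Fin (a (i + 1))) :
    signedDepth i₀ (legVertex i j) = -((j : ℤ) + 1) :=
  if_neg hi

theorem dist_legVertex_hub (i : Fin n) (j : Fin (a (i + 1))) :
    (Palm n a).dist (legVertex i j) hub = j + 1 := by
  have h₀ : 0 < a (i + 1) := j.pos
  refine le_antisymm ?_ ?_
  · calc _ ≤ (Palm n a).dist (legVertex i j) (legVertex i ⟨0, h₀⟩)
          + (Palm n a).dist (legVertex i ⟨0, h₀⟩) hub := connected.dist_triangle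
      _ ≤ j + 1 := by
          rw [dist_eq_one_iff_adj.2 (adj_hub_legVertex rfl).symm]
          exact Nat.add_le_add_right (dist_legVertex_le_of_val_eq_zero j rfl) 1
  · have := (le_abs_self _).trans
      ((reachable_legVertex_hub i j).abs_sub_le_dist (abs_signedDepth_sub_le_one i))
    rw [signedDepth_legVertex_self, signedDepth_hub] at this
    omega

theorem dist_legVertex_legVertex_le (i : Fin n) (j j' : Fin (a (i + 1))) :
    (Palm n a).dist (legVertex i j) (legVertex i j') ≤ j + j' := by
  have h₀ : 0 < a (i + 1) := j.pos
  calc _ ≤ (Palm n a).dist (legVertex i j) (legVertex i ⟨0, h₀⟩)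
        + (Palm n a).dist (legVertex i ⟨0, h₀⟩) (legVertex i j') := connected.dist_triangle
    _ ≤ j + j' := by
        rw [dist_comm (u := legVertex i ⟨0, h₀⟩)]
        exact add_le_add (dist_legVertex_le_of_val_eq_zero j rfl)
          (dist_legVertex_le_of_val_eq_zero j' rfl)

theorem le_dist_legVertex_of_ne {i i' : Fin n} (hi : i ≠ i') (j : Fin (a (i + 1)))
    (j' : Fin (a (i' + 1))) :
    (j : ℕ) + j' + 2 ≤ (Palm n a).dist (legVertex i j) (legVertex i' j') := by
  have := (le_abs_self _).trans ((connected.preconnected (legVertex i j) (legVertex i' j')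
    ).abs_sub_le_dist (abs_signedDepth_sub_le_one i))
  rw [signedDepth_legVertex_self, signedDepth_legVertex_of_ne hi.symm] at this
  omega

section RegularPalm

variable {k m : ℕ}

def wordColoring (e : Fin n → Fin k → Fin m) : PalmVert n (fun _ ↦ k) → Option (Fin k × Fin m)
  | none => none
  | some ⟨i, j⟩ => some (j, e i j)

variable (e : Fin n → Fin k → Fin m)

theorem wordColoring_hub : wordColoring e hub = none := rfl

theorem wordColoring_legVertex (i : Fin n) (j : Fin k) :
    wordColoring e (legVertex i j) = some (j, e i j) := rfl

theorem wordColoring_preimage_none : wordColoring e ⁻¹' {none} = {hub} := by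
  ext u
  obtain rfl | ⟨i, j, rfl⟩ := eq_hub_or_exists_eq_legVertex u
  · simp [wordColoring_hub]
  · simp [wordColoring_legVertex, legVertex_ne_hub]

theorem wordColoring_ne_of_adj {u v : PalmVert n (fun _ ↦ k)} (h : (Palm n fun _ ↦ k).Adj u v) :
    wordColoring e u ≠ wordColoring e v := by
  obtain ⟨-, h⟩ := (fromRel_adj _ _ _).1 h
  rcases u with _ | ⟨i, j⟩ <;> rcases v with _ | ⟨i', j'⟩ <;>
    simp only [wordColoring, ne_eq, reduceCtorEq, Option.some.injEq, Prod.mk.injEq, Fin.ext_iff,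
      not_false_eq_true, not_and, or_self] at h ⊢
  omega

theorem exists_eq_legVertex_of_dist_hub_eq {u v : PalmVert n (fun _ ↦ k)} (huv : u ≠ v)
    (h : (Palm n fun _ ↦ k).dist u hub = (Palm n fun _ ↦ k).dist v hub) :
    ∃ i i' j, i ≠ i' ∧ u = legVertex i j ∧ v = legVertex i' j := by
  obtain rfl | ⟨i, j, rfl⟩ := eq_hub_or_exists_eq_legVertex u <;>
  obtain rfl | ⟨i', j', rfl⟩ := eq_hub_or_exists_eq_legVertex v
  · exact absurd rfl huv
  · simp [dist_legVertex_hub] at h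
  · simp [dist_legVertex_hub] at h
  · rw [dist_legVertex_hub, dist_legVertex_hub, Nat.add_right_cancel_iff] at h
    obtain rfl : j = j' := Fin.ext h
    exact ⟨i, i', j, fun hi ↦ huv (hi ▸ rfl), rfl, rfl⟩

theorem wordColoring_resolves {e : Fin n → Fin k → Fin m} (he : e.Injective)
    {u v : PalmVert n (fun _ ↦ k)} (huv : u ≠ v) :
    ∃ c, distToSet (Palm n fun _ ↦ k) u (wordColoring e ⁻¹' {c}) ≠
      distToSet (Palm n fun _ ↦ k) v (wordColoring e ⁻¹' {c}) := by
  by_cases hdist : (Palm n fun _ ↦ k).dist u hub = (Palm n fun _ ↦ k).dist v hub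
  swap
  · exact ⟨none, by rwa [wordColoring_preimage_none, distToSet_singleton, distToSet_singleton]⟩
  obtain ⟨i, i', j, hi, rfl, rfl⟩ := exists_eq_legVertex_of_dist_hub_eq huv hdist
  obtain ⟨p, hp⟩ := Function.ne_iff.1 (he.ne hi)
  have hfar : ∀ w ∈ wordColoring e ⁻¹' {some (p, e i p)},
      (j : ℕ) + p + 2 ≤ (Palm n fun _ ↦ k).dist (legVertex i' j) w := by
    intro w hw
    obtain rfl | ⟨i'', p', rfl⟩ := eq_hub_or_exists_eq_legVertex w
    · exact absurd hw (by simp [wordColoring_hub])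
    obtain ⟨rfl, hi''⟩ : p' = p ∧ e i'' p' = e i p := by simpa [wordColoring_legVertex] using hw
    have hne : i' ≠ i'' := by rintro rfl; exact hp hi''.symm
    exact le_dist_legVertex_of_ne (a := fun _ ↦ k) hne j p'
  have hmem : legVertex i p ∈ wordColoring e ⁻¹' {some (p, e i p)} := rfl
  refine ⟨some (p, e i p), ne_of_lt ?_⟩
  calc _ ≤ (j : ℕ) + p :=
        (distToSet_le_dist _ hmem).trans (dist_legVertex_legVertex_le (a := fun _ ↦ k) i j p)
    _ < j + p + 2 := by omega
    _ ≤ _ := le_distToSet _ ⟨_, hmem⟩ hfar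

theorem locatingChromaticNumber_le_of_le_pow (h : n ≤ m ^ k) :
    locatingChromaticNumber (Palm n fun _ ↦ k) ≤ k * m + 1 := by
  obtain ⟨e⟩ := Function.Embedding.nonempty_of_card_le (α := Fin n) (β := Fin k → Fin m)
    (by simpa using h)
  calc _ ≤ Fintype.card (Option (Fin k × Fin m)) :=
        locatingChromaticNumber_le_card _ (wordColoring e) (fun _ _ ↦ wordColoring_ne_of_adj e)
          (fun _ _ ↦ wordColoring_resolves e.injective)
    _ = k * m + 1 := by simp

end RegularPalm

end Palm

theorem le_natCeil_rpow_inv_natCast_pow {x : ℝ} (hx : 0 ≤ x) {k : ℕ} (hk : k ≠ 0) :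
    x ≤ (⌈x ^ (k⁻¹ : ℝ)⌉₊ : ℝ) ^ k :=
  calc x = (x ^ (k⁻¹ : ℝ)) ^ k := (Real.rpow_inv_natCast_pow hx hk).symm
    _ ≤ _ := pow_le_pow_left₀ (by positivity) (Nat.le_ceil _) k

theorem mul_natCeil_add_one_le {k : ℕ} (hk : 1 ≤ k) {y : ℝ} (hy : 2 ≤ y) :
    k * ⌈y⌉₊ + 1 ≤ 2 * k * y := by
  have hceil : (⌈y⌉₊ : ℝ) < y + 1 := Nat.ceil_lt_add_one (by linarith)
  have hk' : (1 : ℝ) ≤ k := by exact_mod_cast hk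
  nlinarith

/-- For every positive integer `k` and every `n ≥ 4·3^{2k+1}`,
`χ_L(S_n(k)) ≤ 2k · n^{1/k}`. -/
theorem locatingChromaticNumber_regularPalm_upper (k : ℕ) (hk : 1 ≤ k)
    (n : ℕ) (hn : 4 * 3 ^ (2 * k + 1) ≤ n) :
    (locatingChromaticNumber (Palm n (fun _ => k)) : ℝ) ≤
      2 * (k : ℝ) * (n : ℝ) ^ ((1 : ℝ) / k) := by
  have hk₀ : k ≠ 0 := by omega
  rw [one_div]
  set y := (n : ℝ) ^ (k⁻¹ : ℝ)
  have hpow : 2 ^ k ≤ n :=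
    calc 2 ^ k ≤ 3 ^ k := Nat.pow_le_pow_left (by norm_num) k
      _ ≤ 3 ^ (2 * k + 1) := Nat.pow_le_pow_right (by norm_num) (by omega)
      _ ≤ n := by omega
  have hy : 2 ≤ y := by
    rw [Real.le_rpow_inv_iff_of_pos (by norm_num) (by positivity) (by positivity),
      Real.rpow_natCast]
    exact_mod_cast hpow
  have hnm : n ≤ ⌈y⌉₊ ^ k := by
    exact_mod_cast le_natCeil_rpow_inv_natCast_pow (Nat.cast_nonneg n) hk₀
  calc (locatingChromaticNumber (Palm n (fun _ => k)) : ℝ) ≤ (k * ⌈y⌉₊ + 1 : ℕ) := by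
        exact_mod_cast Palm.locatingChromaticNumber_le_of_le_pow hnm
    _ ≤ 2 * k * y := by push_cast; exact mul_natCeil_add_one_le hk hy
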